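/- arXiv:2507.22432 — 2 statements merged into one kernel-verified Lean document; each statement's English description precedes it below -/
import Mathlib

section
/- Dung's fundamental lemma: if S is an admissible set of arguments and S defends arguments a and a', then S ∪ {a} is admissible and S ∪ {a} defends a'. -/
def Defends {A : Type*} (D : A → A → Prop) (S : Set A) (a : A) : Prop :=
  ∀ b, D b a → ∃ c ∈ S, D c b

def ConflictFree {A : Type*} (D : A → A → Prop) (E : Set A) : Prop :=
  ∀ a ∈ E, ∀ b ∈ E, ¬ D a b

def Admissible {A : Type*} (D : A → A → Prop) (S : Set A) : Prop :=
  ConflictFree D S ∧ ∀ a ∈ S, Defends D S a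

/-- Dung's fundamental lemma: if `S` is admissible and defends `a` and `a'`,
then `S ∪ {a}` is admissible and defends `a'`. -/
theorem dung_fundamental_lemma {A : Type*} (D : A → A → Prop)
    (S : Set A) (a a' : A)
    (hadm : Admissible D S)
    (ha : Defends D S a) (ha' : Defends D S a') :
    Admissible D (S ∪ {a}) ∧ Defends D (S ∪ {a}) a' := by
  obtain ⟨hcf, hdef⟩ := hadm
  -- no element of S attacks a
  have hSa : ∀ b ∈ S, ¬ D b a := by
    intro b hb hba
    obtain ⟨c, hc, hcb⟩ := ha b hba
    exact hcf c hc b hb hcb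
  -- a attacks no element of S ∪ {a}
  have haS : ∀ b, D a b → Defends D S b → False := by
    intro b hab hdb
    obtain ⟨c, hc, hca⟩ := hdb a hab
    exact hSa c hc hca
  have hcf' : ConflictFree D (S ∪ {a}) := by
    rintro x (hx | rfl) y (hy | rfl) hxy
    · exact hcf x hx y hy hxy
    · exact hSa x hx hxy
    · exact haS y hxy (hdef y hy)
    · exact haS y hxy ha
  have hmono : ∀ z, Defends D S z → Defends D (S ∪ {a}) z := by
    intro z hz b hbz
    obtain ⟨c, hc, hcb⟩ := hz b hbz
    exact ⟨c, Or.inl hc, hcb⟩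
  refine ⟨⟨hcf', ?_⟩, hmono a' ha'⟩
  rintro x (hx | rfl)
  · exact hmono x (hdef x hx)
  · exact hmono x ha
end

section
/- Conflict-freeness is preserved under subsets, and the union of a chain of admissible sets is admissible in a finitary framework. -/
/-- Conflict-freeness is preserved under subsets, and in a finitary framework
the union of a chain of admissible sets is admissible. -/
theorem conflictFree_subset_and_chain_union_admissible {A : Type*}
    (D : A → A → Prop)
    (hfin : ∀ a : A, {b | D b a}.Finite) :
    (∀ S T : Set A, ConflictFree D S → T ⊆ S → ConflictFree D T) ∧
    (∀ C : Set (Set A), IsChain (· ⊆ ·) C → (∀ S ∈ C, Admissible D S) →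
      Admissible D (⋃₀ C)) := by
  constructor
  · intro S T hS hTS a ha b hb
    exact hS a (hTS ha) b (hTS hb)
  · intro C hC hadm
    constructor
    · rintro a ⟨S, hS, haS⟩ b ⟨T, hT, hbT⟩
      rcases hC.total hS hT with h | h
      · exact (hadm T hT).1 a (h haS) b hbT
      · exact (hadm S hS).1 a haS b (h hbT)
    · rintro a ⟨S, hS, haS⟩ b hb
      obtain ⟨c, hc, hcb⟩ := (hadm S hS).2 a haS b hb
      exact ⟨c, ⟨S, hS, hc⟩, hcb⟩
end
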